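/- arXiv:2601.11873 — 3 statements merged into one kernel-verified Lean document; each statement's English description precedes it below -/
import Mathlib

section
/- Let L be a weakly dicomplemented lattice and a ∈ L. The normal filter generated by a equals N[a) = {x ∈ L | ∃ n ≥ 1, a^{n(Δ∇)} ≤ x}, where a^{1(Δ∇)} = a^Δ∇ and a^{(k+1)(Δ∇)} = (a^{k(Δ∇)})^Δ∇. -/
class WDL (L : Type*) [Lattice L] [BoundedOrder L] where
  delta : L → L
  nabla : L → L
  delta_delta_le : ∀ x : L, delta (delta x) ≤ x
  delta_antitone : ∀ x y : L, x ≤ y → delta y ≤ delta x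
  meet_delta_eq : ∀ x y : L, (x ⊓ y) ⊔ (x ⊓ delta y) = x
  le_nabla_nabla : ∀ x : L, x ≤ nabla (nabla x)
  nabla_antitone : ∀ x y : L, x ≤ y → nabla y ≤ nabla x
  join_nabla_eq : ∀ x y : L, (x ⊔ y) ⊓ (x ⊔ nabla y) = x

open WDL
/-- `F` is a normal filter: a nonempty upward-closed subset closed under `⊓`
and under `x ↦ x^Δ∇`. -/
def IsNormalFilter (L : Type*) [Lattice L] [BoundedOrder L] [WDL L] (F : Set L) : Prop :=
  F.Nonempty ∧ (∀ x ∈ F, ∀ y, x ≤ y → y ∈ F) ∧ (∀ x ∈ F, ∀ y ∈ F, x ⊓ y ∈ F) ∧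
    (∀ x ∈ F, nabla (delta x) ∈ F)

section Aux
variable {L : Type*} [Lattice L] [BoundedOrder L] [WDL L]

lemma wdl_join_delta_eq_top (y : L) : y ⊔ delta y = (⊤ : L) := by
  have h := meet_delta_eq (L := L) ⊤ y
  simpa using h

lemma wdl_nabla_le_delta (y : L) : nabla y ≤ delta (y : L) := by
  have h := join_nabla_eq (L := L) (delta y) y
  have h1 : delta y ⊔ y = (⊤ : L) := by rw [sup_comm]; exact wdl_join_delta_eq_top y
  rw [h1, top_inf_eq] at h
  exact le_sup_right.trans h.le

lemma wdl_nd_le (x : L) : nabla (delta x) ≤ x :=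
  (wdl_nabla_le_delta (delta x)).trans (delta_delta_le x)

lemma wdl_nd_mono {x y : L} (h : x ≤ y) : nabla (delta x) ≤ nabla (delta y) :=
  nabla_antitone _ _ (delta_antitone _ _ h)

lemma wdl_iter_antitone (a : L) {m n : ℕ} (h : m ≤ n) :
    (fun b => nabla (delta b))^[n] a ≤ (fun b => nabla (delta b))^[m] a := by
  induction n with
  | zero => simpa [Nat.le_zero.mp h]
  | succ k ih =>
    rcases Nat.lt_or_ge m (k+1) with hm | hm
    · calc (fun b => nabla (delta b))^[k+1] a
          = nabla (delta ((fun b => nabla (delta b))^[k] a)) := by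
            rw [Function.iterate_succ_apply']
        _ ≤ (fun b => nabla (delta b))^[k] a := wdl_nd_le _
        _ ≤ _ := ih (Nat.lt_succ_iff.mp hm)
    · have : m = k+1 := le_antisymm h hm
      subst this; exact le_rfl

end Aux

/-- `N[a) = {x | ∃ n ≥ 1, a^{n(Δ∇)} ≤ x}` is the least normal filter containing `a`. -/
theorem wdl_principal_normal_filter (L : Type*) [Lattice L] [BoundedOrder L] [WDL L]
    (a : L) :
    let N : Set L := {x | ∃ n : ℕ, 1 ≤ n ∧ (fun b => nabla (delta b))^[n] a ≤ x}
    a ∈ N ∧ IsNormalFilter L N ∧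
      (∀ G : Set L, IsNormalFilter L G → a ∈ G → N ⊆ G) := by
  intro N
  have haN : a ∈ N := ⟨1, le_rfl, by simpa using wdl_nd_le a⟩
  refine ⟨haN, ⟨⟨a, haN⟩, ?_, ?_, ?_⟩, ?_⟩
  · rintro x ⟨n, hn, hle⟩ y hxy
    exact ⟨n, hn, hle.trans hxy⟩
  · rintro x ⟨n, hn, hnx⟩ y ⟨m, hm, hmy⟩
    refine ⟨max n m, hn.trans (le_max_left _ _), le_inf ?_ ?_⟩
    · exact (wdl_iter_antitone a (le_max_left n m)).trans hnx
    · exact (wdl_iter_antitone a (le_max_right n m)).trans hmy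
  · rintro x ⟨n, hn, hnx⟩
    refine ⟨n + 1, by omega, ?_⟩
    rw [Function.iterate_succ_apply']
    exact wdl_nd_mono hnx
  · rintro G ⟨-, hup, -, hnd⟩ haG x ⟨n, hn, hnx⟩
    have hiter : ∀ k : ℕ, (fun b => nabla (delta b))^[k] a ∈ G := by
      intro k
      induction k with
      | zero => simpa using haG
      | succ j ih =>
        rw [Function.iterate_succ_apply']
        exact hnd _ ih
    exact hup _ (hiter n) x hnx
end

section
/- Let L be a distributive weakly dicomplemented lattice and F a normal filter of L. Then the relation θ_F := {(x, y) ∈ L² | ∃ u ∈ F, x ∨ u^Δ = y ∨ u^Δ} is a congruence of L (compatible with ∧, ∨, ^Δ, ^∇), satisfies [1]_{θ_F} = F, and is the least congruence θ with F ⊆ [1]_θ. -/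
open WDL
/-- A congruence of a WDL: an equivalence relation compatible with `⊓, ⊔, ^Δ, ^∇`. -/
def IsCong (L : Type*) [Lattice L] [BoundedOrder L] [WDL L] (r : L → L → Prop) : Prop :=
  Equivalence r ∧ (∀ x y z, r x y → r (x ⊓ z) (y ⊓ z)) ∧
    (∀ x y z, r x y → r (x ⊔ z) (y ⊔ z)) ∧
    (∀ x y, r x y → r (delta x) (delta y)) ∧ (∀ x y, r x y → r (nabla x) (nabla y))

section Aux
variable {L : Type*} [Lattice L] [BoundedOrder L] [WDL L]

lemma wdl_join_delta_top (x : L) : x ⊔ delta x = ⊤ := by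
  have h := meet_delta_eq (⊤ : L) x
  simpa using h

lemma wdl_meet_nabla_bot (x : L) : x ⊓ nabla x = ⊥ := by
  have h := join_nabla_eq (⊥ : L) x
  simpa using h

lemma wdl_delta_bot : delta (⊥ : L) = ⊤ := by
  have h := wdl_join_delta_top (⊥ : L)
  simpa using h

lemma wdl_delta_top : delta (⊤ : L) = ⊥ := by
  have h : delta (⊤ : L) ≤ ⊥ := by
    rw [← wdl_delta_bot]
    exact delta_delta_le ⊥
  exact le_bot_iff.mp h

lemma wdl_delta_inf (a b : L) : delta (a ⊓ b) = delta a ⊔ delta b := by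
  apply le_antisymm
  · have h1 : delta (a ⊓ b) ≤ delta (delta (delta a) ⊓ delta (delta b)) :=
      delta_antitone _ _ (inf_le_inf (delta_delta_le a) (delta_delta_le b))
    have h2 : delta (delta a ⊔ delta b) ≤ delta (delta a) ⊓ delta (delta b) :=
      le_inf (delta_antitone _ _ le_sup_left) (delta_antitone _ _ le_sup_right)
    have h3 : delta (delta (delta a) ⊓ delta (delta b)) ≤
        delta (delta (delta a ⊔ delta b)) := delta_antitone _ _ h2
    exact h1.trans (h3.trans (delta_delta_le _))
  · exact sup_le (delta_antitone _ _ inf_le_left) (delta_antitone _ _ inf_le_right)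

lemma wdl_nabla_sup (a b : L) : nabla (a ⊔ b) = nabla a ⊓ nabla b := by
  apply le_antisymm
  · exact le_inf (nabla_antitone _ _ le_sup_left) (nabla_antitone _ _ le_sup_right)
  · have h1 : nabla (nabla (nabla a) ⊔ nabla (nabla b)) ≤ nabla (a ⊔ b) :=
      nabla_antitone _ _ (sup_le_sup (le_nabla_nabla a) (le_nabla_nabla b))
    have h2 : nabla (nabla a) ⊔ nabla (nabla b) ≤ nabla (nabla a ⊓ nabla b) :=
      sup_le (nabla_antitone _ _ inf_le_left) (nabla_antitone _ _ inf_le_right)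
    have h3 : nabla (nabla (nabla a ⊓ nabla b)) ≤
        nabla (nabla (nabla a) ⊔ nabla (nabla b)) := nabla_antitone _ _ h2
    exact ((le_nabla_nabla _).trans h3).trans h1

end Aux

section AuxD
variable {L : Type*} [DistribLattice L] [BoundedOrder L] [WDL L]

/-- meet-form implies join-form. -/
lemma wdl_meet_to_join {x y v : L} (h : x ⊓ v = y ⊓ v) :
    x ⊔ delta v = y ⊔ delta v := by
  have key : ∀ z : L, z ⊔ delta v = (z ⊓ v) ⊔ delta v := by
    intro z
    conv_lhs => rw [← meet_delta_eq z v]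
    rw [sup_assoc, sup_eq_right.mpr (inf_le_right : z ⊓ delta v ≤ delta v)]
  rw [key x, key y, h]

/-- join-form implies meet-form with witness `∇δu`. -/
lemma wdl_join_to_meet {x y u : L} (h : x ⊔ delta u = y ⊔ delta u) :
    x ⊓ nabla (delta u) = y ⊓ nabla (delta u) := by
  have key : ∀ z : L, (z ⊔ delta u) ⊓ nabla (delta u) = z ⊓ nabla (delta u) := by
    intro z
    rw [inf_sup_right, wdl_meet_nabla_bot, sup_bot_eq]
  rw [← key x, h, key y]

end AuxD

/-- In a distributive WDL, `θ_F` is the least congruence collapsing the normal filter `F`. -/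
theorem wdl_theta_F_least_congruence (L : Type*) [DistribLattice L] [BoundedOrder L]
    [WDL L] (F : Set L) (hF : IsNormalFilter L F) :
    let r : L → L → Prop := fun x y => ∃ u ∈ F, x ⊔ delta u = y ⊔ delta u
    IsCong L r ∧ {x : L | r x ⊤} = F ∧
      (∀ s : L → L → Prop, IsCong L s → F ⊆ {x : L | s x ⊤} → ∀ x y, r x y → s x y) := by
  intro r
  obtain ⟨⟨u₀, hu₀⟩, hup, hmeet, hnorm⟩ := hF
  refine ⟨⟨⟨?_, ?_, ?_⟩, ?_, ?_, ?_, ?_⟩, ?_, ?_⟩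
  · -- refl
    intro x; exact ⟨u₀, hu₀, rfl⟩
  · -- symm
    rintro x y ⟨u, hu, h⟩; exact ⟨u, hu, h.symm⟩
  · -- trans
    rintro x y z ⟨u, hu, h1⟩ ⟨v, hv, h2⟩
    refine ⟨u ⊓ v, hmeet u hu v hv, ?_⟩
    rw [wdl_delta_inf, ← sup_assoc, h1, sup_assoc, sup_comm (delta u) (delta v),
      ← sup_assoc, h2, sup_assoc, sup_comm (delta v) (delta u)]
  · -- meet compat
    rintro x y z ⟨u, hu, h⟩
    refine ⟨u, hu, ?_⟩
    rw [sup_inf_right, sup_inf_right, h]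
  · -- join compat
    rintro x y z ⟨u, hu, h⟩
    refine ⟨u, hu, ?_⟩
    rw [sup_right_comm x z, h, sup_right_comm]
  · -- delta compat
    rintro x y ⟨u, hu, h⟩
    refine ⟨nabla (delta u), hnorm u hu, ?_⟩
    have hm := wdl_join_to_meet h
    rw [← wdl_delta_inf, hm, wdl_delta_inf]
  · -- nabla compat
    rintro x y ⟨u, hu, h⟩
    refine ⟨nabla (delta u), hnorm u hu, ?_⟩
    have h2 := congrArg nabla h
    rw [wdl_nabla_sup, wdl_nabla_sup] at h2
    exact wdl_meet_to_join h2
  · -- class of top is F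
    ext x
    constructor
    · rintro ⟨u, hu, h⟩
      rw [top_sup_eq] at h
      have h2 := join_nabla_eq x (delta u)
      rw [h, top_inf_eq] at h2
      have hle : nabla (delta u) ≤ x := by
        conv_rhs => rw [← h2]
        exact le_sup_right
      exact hup _ (hnorm u hu) x hle
    · intro hx
      exact ⟨x, hx, by rw [wdl_join_delta_top, top_sup_eq]⟩
  · -- least
    rintro s ⟨heq, hm, hj, hd, hn⟩ hFs x y ⟨u, hu, h⟩
    have h1 : s u ⊤ := hFs hu
    have h2 : s (delta u) (delta ⊤) := hd _ _ h1
    rw [wdl_delta_top] at h2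
    have hx : s (x ⊔ delta u) x := by
      have := hj _ _ x h2
      rwa [bot_sup_eq, sup_comm] at this
    have hy : s (y ⊔ delta u) y := by
      have := hj _ _ y h2
      rwa [bot_sup_eq, sup_comm] at this
    rw [← h] at hy
    exact heq.trans (heq.symm hx) hy
end

section
/- Let L be a weakly dicomplemented lattice and θ a congruence on L. Then [1]_θ = {1} if and only if [0]_θ = {0}. -/
open WDL
section Aux
variable {L : Type*} [Lattice L] [BoundedOrder L] [WDL L]

lemma wdl_join_delta (y : L) : y ⊔ delta y = ⊤ := by
  have h := meet_delta_eq (⊤ : L) y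
  simpa using h

lemma wdl_meet_nabla (y : L) : y ⊓ nabla y = ⊥ := by
  have h := join_nabla_eq (⊥ : L) y
  simpa using h

lemma wdl_nabla_top : nabla (⊤ : L) = ⊥ := by
  have := wdl_meet_nabla (⊤ : L); simpa using this

lemma wdl_nabla_bot : nabla (⊥ : L) = ⊤ := by
  have h : (⊤ : L) ≤ nabla (nabla (⊤ : L)) := le_nabla_nabla ⊤
  rw [wdl_nabla_top] at h
  exact top_le_iff.mp h

end Aux

theorem wdl_cong_top_class_iff_bot_class (L : Type*) [Lattice L] [BoundedOrder L] [WDL L]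
    (r : L → L → Prop) (hr : IsCong L r) :
    {x : L | r x ⊤} = {⊤} ↔ {x : L | r x ⊥} = {⊥} := by
  obtain ⟨heq, hmeet, hjoin, hdelta, hnabla⟩ := hr
  constructor
  · intro htop
    ext x
    simp only [Set.mem_setOf_eq, Set.mem_singleton_iff]
    constructor
    · intro hx
      have h1 : r (nabla x) (nabla ⊥) := hnabla _ _ hx
      rw [wdl_nabla_bot] at h1
      have h2 : nabla x = ⊤ := by
        have := htop ▸ (Set.mem_setOf_eq ▸ h1 : nabla x ∈ {y : L | r y ⊤})
        simpa using this
      calc x = x ⊓ nabla x := by rw [h2]; simp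
        _ = ⊥ := wdl_meet_nabla x
    · rintro rfl; exact heq.refl _
  · intro hbot
    ext x
    simp only [Set.mem_setOf_eq, Set.mem_singleton_iff]
    constructor
    · intro hx
      have h1 : r (delta x) (delta ⊤) := hdelta _ _ hx
      rw [wdl_delta_top] at h1
      have h2 : delta x = ⊥ := by
        have := hbot ▸ (Set.mem_setOf_eq ▸ h1 : delta x ∈ {y : L | r y ⊥})
        simpa using this
      calc x = x ⊔ delta x := by rw [h2]; simp
        _ = ⊤ := wdl_join_delta x
    · rintro rfl; exact heq.refl _
end
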